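/- Let t ≥ 0 and D ≥ 1 be integers and let T_D(t) be the model 𝒢-complex described below, with fundamental class f_t (equal to (1+j)c_t if t > 0 and to c₀ if t = 0). Then there exist no elements y₁ ∈ T_D(t) of degree t+1 and y₂ ∈ T_D(t) of degree t+2 such that ∂y₁ = f_t and ∂y₂ = (1+j)y₁. -/

import Mathlib

/-! The model 𝒢-complex `T_D(t)` over `𝔽 = ℤ/2ℤ`: a fixed part with basis
`c₀, c₁, jc₁, …, c_t, jc_t` (with `jc₀ = c₀`, `j²cᵢ = cᵢ`, `scᵢ = 0`, `∂c₁ = c₀`,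
`∂cᵢ = (1+j)c_{i-1}`), together with a free `𝒢`-module on generators
`x_{t+1}, x_{t+3}, …, x_{t+2D-1}` (so with `𝔽`-basis the monomials `jᵃ x_k` and
`jᵃ s x_k`, `0 ≤ a ≤ 3`), with `∂x_{t+1} = f_t` and `∂x_{t+2i+1} = s(1+j²)x_{t+2i-1}`. -/

/-- The `𝔽`-basis of `T_D(t)`: `c0` is the cell `c₀`; `c i ε` is `c_{i+1}` (for
`ε = false`) or `j c_{i+1}` (for `ε = true`), `0 ≤ i ≤ t-1`; `x k a b` is the monomial
`jᵃ sᵇ x_{t+2k+1}`, `0 ≤ k ≤ D-1`, `a ∈ ℤ/4`, `b ∈ {0,1}`. -/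
inductive TBasis (t D : ℕ) : Type
  | c0 : TBasis t D
  | c : Fin t → Bool → TBasis t D
  | x : Fin D → Fin 4 → Bool → TBasis t D
deriving DecidableEq

/-- The underlying `𝔽`-vector space of the model complex `T_D(t)`. -/
abbrev TModel (t D : ℕ) : Type := TBasis t D →₀ ZMod 2

namespace TModel

variable {t D : ℕ}

/-- The degree of a basis element. -/
def degT : TBasis t D → ℕ
  | .c0 => 0
  | .c i _ => i.1 + 1
  | .x k _ b => t + 2*k.1 + 1 + (if b then 1 else 0)

/-- The degree-`n` graded piece of `T_D(t)`. -/
noncomputable def gradeT (t D : ℕ) (n : ℕ) : Submodule (ZMod 2) (TModel t D) where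
  carrier := {m | ∀ e ∈ m.support, degT e = n}
  add_mem' := by
    intro a b ha hb e he
    rcases Finset.mem_union.mp (Finsupp.support_add he) with h | h
    · exact ha e h
    · exact hb e h
  zero_mem' := by intro e he; simp at he
  smul_mem' := by
    intro c a ha e he
    exact ha e (Finsupp.support_smul he)

/-- The fundamental class `f_t`: `(1+j)c_t` if `t > 0`, and `c₀` if `t = 0`. -/
noncomputable def fT (t D : ℕ) : TModel t D :=
  if h : t = 0 then Finsupp.single .c0 1
  else
    Finsupp.single (.c ⟨t - 1, by omega⟩ false) 1 +
      Finsupp.single (.c ⟨t - 1, by omega⟩ true) 1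

/-- The differential on basis elements: `∂c₀ = 0`, `∂c₁ = ∂(jc₁) = c₀`,
`∂cᵢ = ∂(jcᵢ) = (1+j)c_{i-1}` for `i ≥ 2`; on the free part, `∂(jᵃ s x_k) =
jᵃ(1+j²)x_k`, `∂(jᵃ x_{t+1}) = jᵃ f_t = f_t`, and `∂(jᵃ x_{t+2k+1}) =
jᵃ(1+j²) s x_{t+2k-1}` for `k ≥ 1`. -/
noncomputable def dFun (t D : ℕ) : TBasis t D → TModel t D
  | .c0 => 0
  | .c i _ =>
    if i.1 = 0 then Finsupp.single .c0 1
    else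
      Finsupp.single (.c ⟨i.1 - 1, Nat.lt_of_le_of_lt (Nat.sub_le i.1 1) i.2⟩ false) 1 +
        Finsupp.single (.c ⟨i.1 - 1, Nat.lt_of_le_of_lt (Nat.sub_le i.1 1) i.2⟩ true) 1
  | .x k a b =>
    if b then
      Finsupp.single (.x k a false) 1 + Finsupp.single (.x k (a + 2) false) 1
    else if k.1 = 0 then fT t D
    else
      Finsupp.single (.x ⟨k.1 - 1, Nat.lt_of_le_of_lt (Nat.sub_le k.1 1) k.2⟩ a true) 1 +
        Finsupp.single (.x ⟨k.1 - 1, Nat.lt_of_le_of_lt (Nat.sub_le k.1 1) k.2⟩ (a + 2) true) 1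

/-- The action of `j` on basis elements: `jc₀ = c₀`, `j` swaps `cᵢ ↔ jcᵢ`, and
`j·(jᵃ sᵇ x_k) = j^{a+1} sᵇ x_k`. -/
noncomputable def jFun (t D : ℕ) : TBasis t D → TModel t D
  | .c0 => Finsupp.single .c0 1
  | .c i ε => Finsupp.single (.c i (!ε)) 1
  | .x k a b => Finsupp.single (.x k (a + 1) b) 1

/-- The action of `s` on basis elements: `s` kills the fixed part, `s·(jᵃ x_k) =
j^{-a} s x_k`, `s·(jᵃ s x_k) = 0`. -/
noncomputable def sFun (t D : ℕ) : TBasis t D → TModel t D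
  | .c0 => 0
  | .c _ _ => 0
  | .x k a b => if b then 0 else Finsupp.single (.x k (-a) true) 1

/-- The differential of `T_D(t)`, extended linearly. -/
noncomputable def dT (t D : ℕ) : TModel t D →ₗ[ZMod 2] TModel t D :=
  Finsupp.lift (TModel t D) (ZMod 2) (TBasis t D) (dFun t D)

/-- The operator `j` of `T_D(t)`, extended linearly. -/
noncomputable def jT (t D : ℕ) : TModel t D →ₗ[ZMod 2] TModel t D :=
  Finsupp.lift (TModel t D) (ZMod 2) (TBasis t D) (jFun t D)

/-- The operator `s` of `T_D(t)`, extended linearly. -/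
noncomputable def sT (t D : ℕ) : TModel t D →ₗ[ZMod 2] TModel t D :=
  Finsupp.lift (TModel t D) (ZMod 2) (TBasis t D) (sFun t D)

/-! An element `y₁` of degree `t+1` is a combination of the cells `jᵃ x_{t+1}`, so
`∂y₁ = ε(y₁) f_t` where `ε` sums the coefficients of the cells `jᵃ x_k`. On the other hand
`ε = φ ∘ (1 + j)` for the functional `φ` summing the coefficients of `x_k` and `j² x_k`, and
`φ ∘ ∂ = 0`: the boundaries `∂(jᵃ s x_k) = (1 + j²) jᵃ x_k` hit `x_k, j² x_k` in pairs or not at all,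
and no other boundary involves the cells `jᵃ x_k`. Hence `∂y₂ = (1 + j)y₁` forces `ε(y₁) = 0`,
i.e. `∂y₁ = 0 ≠ f_t`. -/

def freeWeight : TBasis t D → ZMod 2
  | .x _ _ false => 1
  | _ => 0

def evenFreeWeight : TBasis t D → ZMod 2
  | .x _ a false => if a.val % 2 = 0 then 1 else 0
  | _ => 0

/-- The functional `ε`. -/
noncomputable def freeCoeff (t D : ℕ) : TModel t D →ₗ[ZMod 2] ZMod 2 :=
  Finsupp.linearCombination (ZMod 2) freeWeight

/-- The functional `φ`. -/
noncomputable def evenFreeCoeff (t D : ℕ) : TModel t D →ₗ[ZMod 2] ZMod 2 :=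
  Finsupp.linearCombination (ZMod 2) evenFreeWeight

lemma dT_single (e : TBasis t D) : dT t D (Finsupp.single e 1) = dFun t D e := by
  simp [dT]

lemma jT_single (e : TBasis t D) : jT t D (Finsupp.single e 1) = jFun t D e := by
  simp [jT]

lemma evenFreeCoeff_fT : evenFreeCoeff t D (fT t D) = 0 := by
  unfold fT
  split <;> simp [evenFreeCoeff, evenFreeWeight]

lemma evenFreeCoeff_dFun (e : TBasis t D) : evenFreeCoeff t D (dFun t D e) = 0 := by
  rcases e with _ | ⟨i, ε⟩ | ⟨k, a, _ | _⟩
  · simp [dFun]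
  · simp only [dFun]
    split_ifs <;> simp [evenFreeCoeff, evenFreeWeight]
  · simp only [dFun, Bool.false_eq_true, if_false]
    split_ifs
    · exact evenFreeCoeff_fT
    · simp [evenFreeCoeff, evenFreeWeight]
  · fin_cases a <;> simp [dFun, evenFreeCoeff, evenFreeWeight] <;> decide

lemma evenFreeCoeff_comp_dT : evenFreeCoeff t D ∘ₗ dT t D = 0 :=
  Finsupp.lhom_ext' fun e => LinearMap.ext_ring <| by
    simpa [dT_single] using evenFreeCoeff_dFun e

lemma evenFreeCoeff_comp_one_add_jT :
    evenFreeCoeff t D ∘ₗ (LinearMap.id + jT t D) = freeCoeff t D :=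
  Finsupp.lhom_ext' fun e => LinearMap.ext_ring <| by
    rcases e with _ | ⟨i, ε⟩ | ⟨k, a, _ | _⟩ <;> try fin_cases a
    all_goals simp [jT_single, jFun, evenFreeCoeff, freeCoeff, evenFreeWeight, freeWeight]

lemma freeWeight_eq_one_and_dFun_eq_fT {e : TBasis t D} (he : degT e = t + 1) :
    freeWeight e = 1 ∧ dFun t D e = fT t D := by
  rcases e with _ | ⟨i, ε⟩ | ⟨k, a, _ | _⟩ <;> simp [degT] at he <;> try omega
  · have hk : k.val = 0 := by omega
    simp [freeWeight, dFun, hk]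

lemma dT_eq_freeCoeff_smul_fT {y : TModel t D} (hy : y ∈ gradeT t D (t + 1)) :
    dT t D y = freeCoeff t D y • fT t D := by
  rw [dT, freeCoeff, Finsupp.lift_apply, Finsupp.linearCombination_apply, Finsupp.sum,
    Finsupp.sum, Finset.sum_smul]
  refine Finset.sum_congr rfl fun e he => ?_
  obtain ⟨hw, hd⟩ := freeWeight_eq_one_and_dFun_eq_fT (hy e he)
  rw [hw, hd, smul_eq_mul, mul_one]

lemma fT_ne_zero : fT t D ≠ 0 := by
  unfold fT
  split
  · exact Finsupp.single_ne_zero.mpr one_ne_zero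
  · intro h
    simpa using congr($h (.c ⟨t - 1, by omega⟩ false))

end TModel

open TModel in
theorem stmt_15_general (t D : ℕ) :
    ¬ ∃ (y₁ y₂ : TModel t D),
        y₁ ∈ gradeT t D (t + 1) ∧ y₂ ∈ gradeT t D (t + 2) ∧
        dT t D y₁ = fT t D ∧ dT t D y₂ = y₁ + jT t D y₁ := by
  rintro ⟨y₁, y₂, hy₁, -, hd₁, hd₂⟩
  have hε : freeCoeff t D y₁ = 0 :=
    calc freeCoeff t D y₁ = evenFreeCoeff t D (y₁ + jT t D y₁) :=
          (LinearMap.congr_fun evenFreeCoeff_comp_one_add_jT y₁).symm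
      _ = evenFreeCoeff t D (dT t D y₂) := by rw [hd₂]
      _ = 0 := LinearMap.congr_fun evenFreeCoeff_comp_dT y₂
  have h := dT_eq_freeCoeff_smul_fT hy₁
  rw [hd₁, hε, zero_smul] at h
  exact fT_ne_zero h

open TModel in
/-- in the model complex `T_D(t)` (with `D ≥ 1`) there are no elements
`y₁` of degree `t+1` and `y₂` of degree `t+2` such that `∂y₁ = f_t` and
`∂y₂ = (1+j)y₁`. -/
theorem stmt_15 (t D : ℕ) (hD : 1 ≤ D) :
    ¬ ∃ (y₁ y₂ : TModel t D),
        y₁ ∈ gradeT t D (t + 1) ∧ y₂ ∈ gradeT t D (t + 2) ∧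
        dT t D y₁ = fT t D ∧ dT t D y₂ = y₁ + jT t D y₁ :=
  stmt_15_general t D
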